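/- arXiv:2401.10152 — 6 statements merged into one kernel-verified Lean document; each statement's English description precedes it below -/
import Mathlib

section
/- For every integer a ≥ 2, one has 0 < 2a - (√(a²+1) + √(a²-1)) < 1/(2a³). -/
/-!
Write `p = √(a² + 1)`, `q = √(a² - 1)` and `s = p + q`. Then `p² + q² = 2a²` and `p² - q² = 2`, so
`(2a - s)(2a + s) s² = (p - q)² (p + q)² = (p² - q²)² = 4`.
Hence `2a - s = 4 / ((2a + s) s²)` is positive, and since `s ≥ a` and `s² ≥ 4a² - 2` it is at most
`4 / (3a (4a² - 2))`, which is below `1 / (2a³)` as soon as `2a² > 3`.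
-/

section

variable {a p q : ℝ}

theorem two_mul_sub_add_mul_eq_four (hsum : p ^ 2 + q ^ 2 = 2 * a ^ 2)
    (hdiff : p ^ 2 - q ^ 2 = 2) :
    (2 * a - (p + q)) * ((2 * a + (p + q)) * (p + q) ^ 2) = 4 := by
  linear_combination (-2 * (p + q) ^ 2) * hsum + (p ^ 2 - q ^ 2 + 2) * hdiff

theorem two_mul_sub_add_pos (ha : 0 ≤ a) (hp : 0 ≤ p) (hsum : p ^ 2 + q ^ 2 = 2 * a ^ 2)
    (hdiff : p ^ 2 - q ^ 2 = 2) :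
    0 < 2 * a - (p + q) := by
  have hs_pos : 0 < p + q := by nlinarith
  refine pos_of_mul_pos_left ?_ (by positivity : 0 ≤ (2 * a + (p + q)) * (p + q) ^ 2)
  rw [two_mul_sub_add_mul_eq_four hsum hdiff]
  norm_num

theorem two_mul_sub_add_lt (ha : 0 < a) (ha' : 3 < 2 * a ^ 2) (hp : 0 ≤ p) (hq : 0 ≤ q)
    (hsum : p ^ 2 + q ^ 2 = 2 * a ^ 2) (hdiff : p ^ 2 - q ^ 2 = 2) :
    2 * a - (p + q) < 1 / (2 * a ^ 3) := by
  have hs : a ≤ p + q := by nlinarith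
  have hs_pos : 0 < p + q := by linarith
  have hs_sq : 4 * a ^ 2 - 2 ≤ (p + q) ^ 2 := by nlinarith
  have hX : 8 * a ^ 3 < (2 * a + (p + q)) * (p + q) ^ 2 := by
    calc 8 * a ^ 3 < 3 * a * (4 * a ^ 2 - 2) := by nlinarith
      _ ≤ (2 * a + (p + q)) * (p + q) ^ 2 := by gcongr <;> nlinarith
  have hX_pos : 0 < (2 * a + (p + q)) * (p + q) ^ 2 := by positivity
  rw [eq_div_of_mul_eq hX_pos.ne' (two_mul_sub_add_mul_eq_four hsum hdiff),
    div_lt_div_iff₀ hX_pos (by positivity)]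
  linarith

end

theorem two_a_minus_sqrts (a : ℕ) (ha : 2 ≤ a) :
    0 < 2 * (a : ℝ) - (Real.sqrt ((a : ℝ) ^ 2 + 1) + Real.sqrt ((a : ℝ) ^ 2 - 1)) ∧
    2 * (a : ℝ) - (Real.sqrt ((a : ℝ) ^ 2 + 1) + Real.sqrt ((a : ℝ) ^ 2 - 1))
      < 1 / (2 * (a : ℝ) ^ 3) := by
  have ha' : (2 : ℝ) ≤ a := by exact_mod_cast ha
  have hp := Real.sq_sqrt (by positivity : (0 : ℝ) ≤ (a : ℝ) ^ 2 + 1)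
  have hq := Real.sq_sqrt (by nlinarith : (0 : ℝ) ≤ (a : ℝ) ^ 2 - 1)
  set p := Real.sqrt ((a : ℝ) ^ 2 + 1)
  set q := Real.sqrt ((a : ℝ) ^ 2 - 1)
  have hsum : p ^ 2 + q ^ 2 = 2 * (a : ℝ) ^ 2 := by rw [hp, hq]; ring
  have hdiff : p ^ 2 - q ^ 2 = 2 := by rw [hp, hq]; ring
  exact ⟨two_mul_sub_add_pos (by positivity) (Real.sqrt_nonneg _) hsum hdiff,
    two_mul_sub_add_lt (by positivity) (by nlinarith) (Real.sqrt_nonneg _) (Real.sqrt_nonneg _)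
      hsum hdiff⟩
end

section
/- For every integer a ≥ 2, √(a²+1) + √(a²-1) is not an integer and its distance to the nearest integer is at most 1/(2a³). -/
/-!
Write `s = √(a² + 1) + √(a² - 1)`. Since `s² = 2a² + 2√(a⁴ - 1)` and `(a²)² - (a⁴ - 1) = 1`,
rationalizing twice gives `(2a - s) (a² + √(a⁴ - 1)) (2a + s) = 2`, and `(a² + √(a⁴ - 1)) (2a + s) ≥ 4a³`.
Hence `0 < 2a - s ≤ 1 / (2a³) < 1`: `s` lies strictly between `2a - 1` and `2a`, within `1 / (2a³)` of `2a`.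
-/

/-- Distance from a real number to the nearest integer. -/
noncomputable def distNearestInt (x : ℝ) : ℝ := |x - round x|

theorem ne_intCast_of_lt_of_lt {α : Type*} [Ring α] [LinearOrder α] [IsStrictOrderedRing α]
    {x : α} {n : ℤ} (h₁ : (n : α) - 1 < x) (h₂ : x < n) (m : ℤ) : x ≠ m := by
  rintro rfl
  have : n - 1 < m := by exact_mod_cast h₁
  have : m < n := by exact_mod_cast h₂
  omega

section

variable {t x y : ℝ}

theorem two_mul_sub_add_mul_eq_two (hx : x ^ 2 = t ^ 2 + 1) (hy : y ^ 2 = t ^ 2 - 1) :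
    (2 * t - (x + y)) * ((t ^ 2 + x * y) * (2 * t + (x + y))) = 2 := by
  linear_combination (-t ^ 2 - x * y - 2 * y ^ 2) * hx + (-3 * t ^ 2 - 2 - x * y) * hy

theorem four_mul_pow_three_le (ht₀ : 0 ≤ t) (ht : 2 ≤ t ^ 2) (hx₀ : 0 ≤ x) (hy₀ : 0 ≤ y)
    (hx : x ^ 2 = t ^ 2 + 1) (hy : y ^ 2 = t ^ 2 - 1) :
    4 * t ^ 3 ≤ (t ^ 2 + x * y) * (2 * t + (x + y)) := by
  have htx : t ≤ x := by nlinarith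
  have hty : 1 ≤ t * y :=
    one_le_mul_of_one_le_of_one_le (by nlinarith) (by nlinarith)
  calc 4 * t ^ 3 ≤ t * (4 * t ^ 2 + 4 * (t * y) - 1) := by nlinarith
    _ = (t ^ 2 + t * y) * (2 * t + (t + y)) := by linear_combination (-t) * hy
    _ ≤ (t ^ 2 + x * y) * (2 * t + (x + y)) := by gcongr

theorem sub_sqrt_add_sqrt_pos_and_le (ht₀ : 0 ≤ t) (ht : 2 ≤ t ^ 2) :
    0 < 2 * t - (√(t ^ 2 + 1) + √(t ^ 2 - 1)) ∧
      2 * t - (√(t ^ 2 + 1) + √(t ^ 2 - 1)) ≤ 1 / (2 * t ^ 3) := by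
  have hx := Real.sq_sqrt (by positivity : 0 ≤ t ^ 2 + 1)
  have hy := Real.sq_sqrt (by linarith : 0 ≤ t ^ 2 - 1)
  have hprod := two_mul_sub_add_mul_eq_two hx hy
  have hD := four_mul_pow_three_le ht₀ ht (Real.sqrt_nonneg _) (Real.sqrt_nonneg _) hx hy
  set g := 2 * t - (√(t ^ 2 + 1) + √(t ^ 2 - 1))
  set D := (t ^ 2 + √(t ^ 2 + 1) * √(t ^ 2 - 1)) * (2 * t + (√(t ^ 2 + 1) + √(t ^ 2 - 1)))
  have ht₃ : 0 < 2 * t ^ 3 := by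
    have : 0 < t := by nlinarith
    positivity
  have hg : 0 < g := (mul_pos_iff_of_pos_right (by linarith)).mp (hprod ▸ two_pos)
  refine ⟨hg, ?_⟩
  rw [le_div_iff₀ ht₃]
  nlinarith [mul_le_mul_of_nonneg_left hD hg.le]

end

theorem sqrt_sum_close_to_int (a : ℕ) (ha : 2 ≤ a) :
    (∀ m : ℤ, Real.sqrt ((a : ℝ) ^ 2 + 1) + Real.sqrt ((a : ℝ) ^ 2 - 1) ≠ m) ∧
    distNearestInt (Real.sqrt ((a : ℝ) ^ 2 + 1) + Real.sqrt ((a : ℝ) ^ 2 - 1))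
      ≤ 1 / (2 * (a : ℝ) ^ 3) := by
  have ht : (2 : ℝ) ≤ a := by exact_mod_cast ha
  obtain ⟨hpos, hle⟩ := sub_sqrt_add_sqrt_pos_and_le (by positivity) (by nlinarith)
  have hsmall : 1 / (2 * (a : ℝ) ^ 3) < 1 := by
    rw [div_lt_one (by positivity)]
    nlinarith
  have hcast : ((2 * a : ℤ) : ℝ) = 2 * a := by push_cast; ring
  refine ⟨ne_intCast_of_lt_of_lt (n := 2 * a) (by linarith) (by linarith), ?_⟩
  calc _ ≤ |Real.sqrt ((a : ℝ) ^ 2 + 1) + Real.sqrt ((a : ℝ) ^ 2 - 1) - ((2 * a : ℤ) : ℝ)| :=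
        round_le _ _
    _ = 2 * a - (Real.sqrt ((a : ℝ) ^ 2 + 1) + Real.sqrt ((a : ℝ) ^ 2 - 1)) := by
        rw [hcast, abs_sub_comm, abs_of_pos hpos]
    _ ≤ _ := hle
end

section
/- For every integer k ≥ 2, the quantity √((k−1)²+2) + √((k+1)²+2) + √(4k²−8) − 4k tends to 0 as k → ∞, and in fact 0 < ‖√((k−1)²+2) + √((k+1)²+2) + √(4k²−8)‖ ≤ C/k⁵ for all sufficiently large k, for some absolute constant C. -/
/-!
In powers of `1/k`, `√(y² + 2) = y + 1/y - 1/(2y³) + 1/(2y⁵) - …` for `y = k ± 1` and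
`√(4k² - 8) = 2k - 2/k - 1/k³ - 1/k⁵ - …`. In the sum `S(k)` of the three radicals the terms of
order `k⁻¹` and `k⁻³` cancel, leaving `4k - 4/k⁵ + O(k⁻⁷)`. Truncated Taylor expansions of
`√(1 + t)` that bound it from the appropriate side turn this into
`4k - 7/k⁵ ≤ S(k) ≤ 4k - 1/k⁵` for `k ≥ 4`, so `S(k)` lies strictly between `4k - 1` and `4k`,
within `7/k⁵` of the integer `4k`.
-/

open Filter

open Topology

theorem sqrt_one_add_le_cubic {t : ℝ} (ht : -1 ≤ t) :
    √(1 + t) ≤ 1 + t / 2 - t ^ 2 / 8 + t ^ 3 / 16 := by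
  have hp : 0 ≤ 1 + t / 2 - t ^ 2 / 8 + t ^ 3 / 16 := by
    nlinarith [sq_nonneg (t - 1), sq_nonneg t]
  refine Real.sqrt_le_iff.2 ⟨hp, ?_⟩
  -- the square of the Taylor polynomial exceeds `1 + t` by `t⁴ ((t - 2)² + 16) / 256`
  nlinarith [mul_nonneg (pow_two_nonneg (t ^ 2)) (by positivity : 0 ≤ (t - 2) ^ 2 + 16)]

theorem quadratic_le_sqrt_one_add {t : ℝ} (ht : 0 ≤ t) :
    1 + t / 2 - t ^ 2 / 8 ≤ √(1 + t) := by
  rcases le_or_gt t 8 with h8 | h8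
  · apply Real.le_sqrt_of_sq_le
    nlinarith [mul_nonneg (pow_nonneg ht 3) (sub_nonneg.2 h8)]
  · exact (by nlinarith : 1 + t / 2 - t ^ 2 / 8 ≤ 0).trans (Real.sqrt_nonneg _)

theorem cubic_le_sqrt_one_add_of_nonpos {t : ℝ} (ht : -(1 / 2) ≤ t) (ht0 : t ≤ 0) :
    1 + t / 2 - t ^ 2 / 8 + t ^ 3 / 8 ≤ √(1 + t) := by
  apply Real.le_sqrt_of_sq_le
  have hcubic : 0 ≤ 8 + 9 * t - 2 * t ^ 2 + t ^ 3 := by nlinarith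
  nlinarith [mul_nonneg (pow_nonneg (neg_nonneg.2 ht0) 3) hcubic]

theorem sqrt_sq_add_eq_mul_sqrt {y : ℝ} (hy : 0 < y) (a : ℝ) :
    √(y ^ 2 + a) = y * √(1 + a / y ^ 2) := by
  rw [← Real.sqrt_sq hy.le, ← Real.sqrt_mul (sq_nonneg y), Real.sqrt_sq hy.le]
  congr 1
  field_simp

theorem sqrt_sq_add_two_le {y : ℝ} (hy : 0 < y) :
    √(y ^ 2 + 2) ≤ y + 1 / y - 1 / (2 * y ^ 3) + 1 / (2 * y ^ 5) := by
  rw [sqrt_sq_add_eq_mul_sqrt hy]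
  calc y * √(1 + 2 / y ^ 2)
      ≤ y * (1 + 2 / y ^ 2 / 2 - (2 / y ^ 2) ^ 2 / 8 + (2 / y ^ 2) ^ 3 / 16) :=
        mul_le_mul_of_nonneg_left
          (sqrt_one_add_le_cubic (by linarith [show 0 ≤ 2 / y ^ 2 by positivity])) hy.le
    _ = y + 1 / y - 1 / (2 * y ^ 3) + 1 / (2 * y ^ 5) := by field_simp; ring

theorem le_sqrt_sq_add_two {y : ℝ} (hy : 0 < y) :
    y + 1 / y - 1 / (2 * y ^ 3) ≤ √(y ^ 2 + 2) := by
  rw [sqrt_sq_add_eq_mul_sqrt hy]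
  calc y + 1 / y - 1 / (2 * y ^ 3) = y * (1 + 2 / y ^ 2 / 2 - (2 / y ^ 2) ^ 2 / 8) := by
        field_simp; ring
    _ ≤ y * √(1 + 2 / y ^ 2) :=
        mul_le_mul_of_nonneg_left (quadratic_le_sqrt_one_add (by positivity)) hy.le

theorem sqrt_four_sq_sub_eight_le {x : ℝ} (hx : 2 ≤ x) :
    √(4 * x ^ 2 - 8) ≤ 2 * x - 2 / x - 1 / x ^ 3 - 1 / x ^ 5 := by
  have hx0 : 0 < x := by linarith
  have ht : -1 ≤ -8 / (2 * x) ^ 2 := by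
    rw [neg_div, neg_le_neg_iff, div_le_one (by positivity)]; nlinarith
  rw [show 4 * x ^ 2 - 8 = (2 * x) ^ 2 + -8 by ring, sqrt_sq_add_eq_mul_sqrt (by positivity)]
  calc 2 * x * √(1 + -8 / (2 * x) ^ 2)
      ≤ 2 * x * (1 + -8 / (2 * x) ^ 2 / 2 - (-8 / (2 * x) ^ 2) ^ 2 / 8
          + (-8 / (2 * x) ^ 2) ^ 3 / 16) :=
        mul_le_mul_of_nonneg_left (sqrt_one_add_le_cubic ht) (by positivity)
    _ = 2 * x - 2 / x - 1 / x ^ 3 - 1 / x ^ 5 := by field_simp; ring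

theorem le_sqrt_four_sq_sub_eight {x : ℝ} (hx : 2 ≤ x) :
    2 * x - 2 / x - 1 / x ^ 3 - 2 / x ^ 5 ≤ √(4 * x ^ 2 - 8) := by
  have hx0 : 0 < x := by linarith
  have ht : -(1 / 2) ≤ -8 / (2 * x) ^ 2 := by
    rw [neg_div, neg_le_neg_iff, div_le_div_iff₀ (by positivity) (by norm_num)]; nlinarith
  rw [show 4 * x ^ 2 - 8 = (2 * x) ^ 2 + -8 by ring, sqrt_sq_add_eq_mul_sqrt (by positivity)]
  calc 2 * x - 2 / x - 1 / x ^ 3 - 2 / x ^ 5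
      = 2 * x * (1 + -8 / (2 * x) ^ 2 / 2 - (-8 / (2 * x) ^ 2) ^ 2 / 8
          + (-8 / (2 * x) ^ 2) ^ 3 / 8) := by field_simp; ring
    _ ≤ 2 * x * √(1 + -8 / (2 * x) ^ 2) :=
        mul_le_mul_of_nonneg_left (cubic_le_sqrt_one_add_of_nonpos ht
          (div_nonpos_of_nonpos_of_nonneg (by norm_num) (by positivity))) (by positivity)

noncomputable def marshallSum (x : ℝ) : ℝ :=
  √((x - 1) ^ 2 + 2) + √((x + 1) ^ 2 + 2) + √(4 * x ^ 2 - 8)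

theorem marshallSum_le {x : ℝ} (hx : 4 ≤ x) : marshallSum x ≤ 4 * x - 1 / x ^ 5 := by
  have hx1 : 0 < x ^ 2 - 1 := by nlinarith
  have hcancel : 1 / (x - 1) - 1 / (2 * (x - 1) ^ 3) + 1 / (2 * (x - 1) ^ 5)
      + (1 / (x + 1) - 1 / (2 * (x + 1) ^ 3) + 1 / (2 * (x + 1) ^ 5)) ≤ 2 / x + 1 / x ^ 3 := by
    rw [← sub_nonneg]
    have hne : x - 1 ≠ 0 := by linarith
    have hexact : 2 / x + 1 / x ^ 3
        - (1 / (x - 1) - 1 / (2 * (x - 1) ^ 3) + 1 / (2 * (x - 1) ^ 5)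
        + (1 / (x + 1) - 1 / (2 * (x + 1) ^ 3) + 1 / (2 * (x + 1) ^ 5)))
        = (6 * x ^ 8 - 34 * x ^ 6 - 8 * x ^ 4 + 6 * x ^ 2 - 2) / (2 * x ^ 3 * (x ^ 2 - 1) ^ 5) := by
      field_simp
      ring
    rw [hexact]
    apply div_nonneg _ (by positivity)
    have hu : 16 ≤ x ^ 2 := by nlinarith
    nlinarith [mul_nonneg (pow_nonneg (sq_nonneg x) 3) (by linarith : 0 ≤ 6 * x ^ 2 - 96),
      mul_nonneg (pow_nonneg (sq_nonneg x) 2) (by linarith : 0 ≤ x ^ 2 - 16)]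
  have hm := sqrt_sq_add_two_le (show 0 < x - 1 by linarith)
  have hp := sqrt_sq_add_two_le (show 0 < x + 1 by linarith)
  have hc := sqrt_four_sq_sub_eight_le (show 2 ≤ x by linarith)
  rw [marshallSum]
  linarith

theorem le_marshallSum {x : ℝ} (hx : 4 ≤ x) : 4 * x - 7 / x ^ 5 ≤ marshallSum x := by
  have hx1 : 0 < x ^ 2 - 1 := by nlinarith
  have hcancel : 2 / x + 1 / x ^ 3 - 5 / x ^ 5 ≤ 1 / (x - 1) - 1 / (2 * (x - 1) ^ 3)
      + (1 / (x + 1) - 1 / (2 * (x + 1) ^ 3)) := by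
    rw [← sub_nonneg]
    have hne : x - 1 ≠ 0 := by linarith
    have hexact : 1 / (x - 1) - 1 / (2 * (x - 1) ^ 3) + (1 / (x + 1) - 1 / (2 * (x + 1) ^ 3))
        - (2 / x + 1 / x ^ 3 - 5 / x ^ 5)
          = (2 * x ^ 6 - 32 * x ^ 4 + 32 * x ^ 2 - 10) / (2 * x ^ 5 * (x ^ 2 - 1) ^ 3) := by
      field_simp
      ring
    rw [hexact]
    apply div_nonneg _ (by positivity)
    have hu : 16 ≤ x ^ 2 := by nlinarith
    nlinarith [mul_nonneg (pow_nonneg (sq_nonneg x) 2) (by linarith : 0 ≤ x ^ 2 - 16)]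
  have hm := le_sqrt_sq_add_two (show 0 < x - 1 by linarith)
  have hp := le_sqrt_sq_add_two (show 0 < x + 1 by linarith)
  have hc := le_sqrt_four_sq_sub_eight (show 2 ≤ x by linarith)
  rw [marshallSum]
  linarith [show 7 / x ^ 5 = 5 / x ^ 5 + 2 / x ^ 5 by ring]

theorem distNearestInt_pos_of_lt_of_lt {x : ℝ} (n : ℤ) (h₁ : n - 1 < x) (h₂ : x < n) :
    0 < distNearestInt x := by
  refine abs_pos.2 (sub_ne_zero.2 fun hx => ?_)
  rw [hx] at h₁ h₂
  have h₁' : n - 1 < round x := by exact_mod_cast h₁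
  have h₂' : round x < n := by exact_mod_cast h₂
  omega

theorem marshall_family :
    Tendsto (fun k : ℕ =>
      Real.sqrt (((k : ℝ) - 1) ^ 2 + 2) + Real.sqrt (((k : ℝ) + 1) ^ 2 + 2)
        + Real.sqrt (4 * (k : ℝ) ^ 2 - 8) - 4 * (k : ℝ)) atTop (nhds 0) ∧
    ∃ C : ℝ, 0 < C ∧ ∀ᶠ k : ℕ in atTop,
      0 < distNearestInt (Real.sqrt (((k : ℝ) - 1) ^ 2 + 2) + Real.sqrt (((k : ℝ) + 1) ^ 2 + 2)
            + Real.sqrt (4 * (k : ℝ) ^ 2 - 8)) ∧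
      distNearestInt (Real.sqrt (((k : ℝ) - 1) ^ 2 + 2) + Real.sqrt (((k : ℝ) + 1) ^ 2 + 2)
            + Real.sqrt (4 * (k : ℝ) ^ 2 - 8)) ≤ C / (k : ℝ) ^ 5 := by
  have hlarge : ∀ᶠ k : ℕ in atTop, (4 : ℝ) ≤ k :=
    tendsto_natCast_atTop_atTop.eventually_ge_atTop 4
  have hdecay : Tendsto (fun k : ℕ => 7 / (k : ℝ) ^ 5) atTop (𝓝 0) :=
    tendsto_const_nhds.div_atTop
      ((tendsto_pow_atTop (by norm_num)).comp tendsto_natCast_atTop_atTop)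
  have hgap : ∀ᶠ k : ℕ in atTop,
      |marshallSum k - 4 * k| ≤ 7 / (k : ℝ) ^ 5 ∧
        4 * k - 1 < marshallSum k ∧ marshallSum k < 4 * k := by
    filter_upwards [hlarge] with k hk
    have hlo := le_marshallSum hk
    have hhi := marshallSum_le hk
    have hpos : 0 < 1 / (k : ℝ) ^ 5 := by positivity
    have hsmall : 7 / (k : ℝ) ^ 5 < 1 := by
      rw [div_lt_one (by positivity)]; nlinarith [pow_le_pow_left₀ (by norm_num) hk 5]
    exact ⟨abs_le.2 ⟨by linarith, by linarith⟩, by linarith, by linarith⟩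
  refine ⟨squeeze_zero_norm' (hgap.mono fun k hk => hk.1) hdecay, 7, by norm_num, ?_⟩
  filter_upwards [hgap] with k ⟨hdist, hlo, hhi⟩
  refine ⟨distNearestInt_pos_of_lt_of_lt (4 * k) (by push_cast; exact hlo)
    (by push_cast; exact hhi), ?_⟩
  calc distNearestInt (marshallSum k) ≤ |marshallSum k - ((4 * k : ℤ) : ℝ)| := round_le _ _
    _ ≤ 7 / (k : ℝ) ^ 5 := by push_cast; exact hdist
end

section
/- For every nonnegative integer m ≥ 2 and every positive integer n, |∑_{i=0}^{m} C(m,i)·(−1)^i·√(n+i)| ≤ (2m−3)!! / (2^m · n^(m−1/2)). -/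
/-!
The sum is `(-1)^m Δ^m √ n`, with `Δ` the forward difference of step one. Forward differences
commute with differentiation, so the mean value theorem applied `m` times gives
`Δ^m f x = f⁽ᵐ⁾ ξ` for some `ξ ∈ [x, x + m]`. For `f = √` this is
`(1/2)(1/2 - 1)⋯(1/2 - m + 1) ξ^(1/2 - m)`; the power decreases in `ξ`, so it is at most its
value at `n`, and the falling factorial has absolute value `(2m - 3)‼ / 2^m`.
-/

open Finset
open scoped Nat

theorem sum_neg_one_pow_mul_choose_smul_eq {M G : Type*} [AddCommMonoid M] [AddCommGroup G]
    (h : M) (f : M → G) (n : ℕ) (y : M) :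
    ∑ k ∈ range (n + 1), ((-1 : ℤ) ^ k * n.choose k) • f (y + k • h)
      = (-1 : ℤ) ^ n • (fwdDiff h)^[n] f y := by
  rw [fwdDiff_iter_eq_sum_shift, smul_sum]
  refine sum_congr rfl fun k hk => ?_
  have hkn : k ≤ n := Nat.lt_succ_iff.mp (mem_range.mp hk)
  rw [smul_smul, ← mul_assoc, ← Nat.sub_add_cancel hkn, pow_add, Nat.add_sub_cancel,
    mul_comm ((-1 : ℤ) ^ (n - k)), mul_assoc ((-1 : ℤ) ^ k), ← pow_add, ← two_mul, pow_mul]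
  simp

section IteratedMeanValue

variable {a h : ℝ}

theorem hasDerivAt_fwdDiff_iter {f f' : ℝ → ℝ} (hh : 0 ≤ h)
    (hf : ∀ x, a < x → HasDerivAt f (f' x) x) (m : ℕ) {x : ℝ} (hx : a < x) :
    HasDerivAt ((fwdDiff h)^[m] f) ((fwdDiff h)^[m] f' x) x := by
  induction m generalizing x with
  | zero => exact hf x hx
  | succ m ih =>
    rw [Function.iterate_succ', Function.comp_apply, Function.comp_apply]
    exact ((ih (by linarith)).comp_add_const x h).sub (ih hx)

theorem exists_fwdDiff_iter_eq_pow_mul {F : ℕ → ℝ → ℝ} (hh : 0 < h)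
    (hF : ∀ k x, a < x → HasDerivAt (F k) (F (k + 1) x) x) (m : ℕ) {x : ℝ} (hx : a < x) :
    ∃ ξ ∈ Set.Icc x (x + m * h), (fwdDiff h)^[m] (F 0) x = h ^ m * F m ξ := by
  induction m generalizing F x with
  | zero => exact ⟨x, by simp, by simp⟩
  | succ m ih =>
    have hderiv (y : ℝ) (hy : a < y) :
        HasDerivAt ((fwdDiff h)^[m] (F 0)) ((fwdDiff h)^[m] (F 1) y) y :=
      hasDerivAt_fwdDiff_iter hh.le (hF 0) m hy
    obtain ⟨c, ⟨hxc, hcx⟩, hc⟩ := exists_hasDerivAt_eq_slope ((fwdDiff h)^[m] (F 0))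
      ((fwdDiff h)^[m] (F 1)) (lt_add_of_pos_right x hh)
      (fun y hy => (hderiv y (hx.trans_le hy.1)).continuousAt.continuousWithinAt)
      (fun y hy => hderiv y (hx.trans hy.1))
    obtain ⟨ξ, ⟨hcξ, hξc⟩, hξ⟩ :=
      ih (F := fun k => F (k + 1)) (fun k => hF (k + 1)) (hx.trans hxc)
    refine ⟨ξ, ⟨hxc.le.trans hcξ, ?_⟩, ?_⟩
    · push_cast
      nlinarith
    · rw [add_sub_cancel_left, eq_div_iff hh.ne'] at hc
      rw [zero_add] at hξ
      rw [hξ] at hc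
      rw [Function.iterate_succ_apply', fwdDiff, ← hc, pow_succ]
      ring

end IteratedMeanValue

theorem hasDerivAt_descPochhammer_eval_mul_rpow (r : ℝ) (k : ℕ) {x : ℝ} (hx : 0 < x) :
    HasDerivAt (fun y => (descPochhammer ℝ k).eval r * y ^ (r - k))
      ((descPochhammer ℝ (k + 1)).eval r * x ^ (r - (k + 1 : ℕ))) x := by
  refine ((Real.hasDerivAt_rpow_const (p := r - k) (Or.inl hx.ne')).const_mul
    ((descPochhammer ℝ k).eval r)).congr_deriv ?_
  rw [descPochhammer_succ_eval]
  push_cast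
  ring_nf

theorem abs_fwdDiff_iter_rpow_le {r h : ℝ} (hh : 0 < h) {m : ℕ} (hrm : r ≤ m) {x : ℝ}
    (hx : 0 < x) :
    |(fwdDiff h)^[m] (fun y => y ^ r) x|
      ≤ h ^ m * |(descPochhammer ℝ m).eval r| * x ^ (r - m) := by
  obtain ⟨ξ, ⟨hxξ, -⟩, hξ⟩ := exists_fwdDiff_iter_eq_pow_mul
    (F := fun k y => (descPochhammer ℝ k).eval r * y ^ (r - k)) hh
    (fun k _ hy => hasDerivAt_descPochhammer_eval_mul_rpow r k hy) m hx
  simp only [descPochhammer_zero, Polynomial.eval_one, one_mul, Nat.cast_zero, sub_zero] at hξ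
  rw [hξ, abs_mul, abs_mul, abs_of_pos (pow_pos hh m),
    abs_of_pos (Real.rpow_pos_of_pos (hx.trans_le hxξ) _), mul_assoc]
  exact mul_le_mul_of_nonneg_left (mul_le_mul_of_nonneg_left
    (Real.rpow_le_rpow_of_nonpos hx hxξ (sub_nonpos.mpr hrm)) (abs_nonneg _)) (by positivity)

theorem abs_descPochhammer_eval_half (m : ℕ) :
    |(descPochhammer ℝ m).eval (1 / 2)| = ((2 * m - 3)‼ : ℝ) / 2 ^ m := by
  rcases m with _ | m
  · simp
  induction m with
  | zero => simp [abs_of_pos]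
  | succ m ih =>
    rw [descPochhammer_succ_eval, abs_mul, ih, show 2 * (m + 1 + 1) - 3 = 2 * m + 1 by omega,
      show 2 * (m + 1) - 3 = 2 * m - 1 by omega, Nat.doubleFactorial_add_one,
      abs_of_nonpos (by push_cast; linarith)]
    push_cast
    ring

theorem qian_wang_inequality (m n : ℕ) (hm : 2 ≤ m) (hn : 1 ≤ n) :
    |∑ i ∈ Finset.range (m + 1), (m.choose i : ℝ) * (-1) ^ i * Real.sqrt (n + i)|
      ≤ (Nat.doubleFactorial (2 * m - 3) : ℝ) / (2 ^ m * (n : ℝ) ^ ((m : ℝ) - 1 / 2)) := by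
  have hn0 : (0 : ℝ) < n := by exact_mod_cast hn
  have hsum : ∑ i ∈ range (m + 1), (m.choose i : ℝ) * (-1) ^ i * Real.sqrt (n + i)
      = (-1) ^ m * (fwdDiff 1)^[m] Real.sqrt n := by
    have := sum_neg_one_pow_mul_choose_smul_eq (1 : ℝ) Real.sqrt m n
    simp only [zsmul_eq_mul, nsmul_eq_mul, mul_one] at this
    push_cast at this
    rw [← this]
    exact sum_congr rfl fun i _ => by ring
  have hm' : (1 / 2 : ℝ) ≤ m := by
    have : (2 : ℝ) ≤ m := by exact_mod_cast hm
    linarith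
  have hsqrt : Real.sqrt = fun y => y ^ (1 / 2 : ℝ) := funext Real.sqrt_eq_rpow
  rw [hsum, hsqrt, abs_mul, abs_pow, abs_neg, abs_one, one_pow, one_mul]
  refine (abs_fwdDiff_iter_rpow_le one_pos hm' hn0).trans_eq ?_
  rw [one_pow, one_mul, abs_descPochhammer_eval_half, ← neg_sub, Real.rpow_neg hn0.le]
  field_simp
end

section
/- If a is a positive integer that is not a perfect square, then ‖√(4a)‖ ≥ 1/(2√(4a)+1), and consequently for 1 ≤ a, b ≤ n with 4ab not a perfect square, ‖√(4ab)‖ ≥ 1/(5n). -/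
lemma not_isSquare_four_mul {a : ℕ} (h : ¬ IsSquare a) : ¬ IsSquare (4 * a) := by
  rintro ⟨r, hr⟩
  apply h
  rw [← Rat.isSquare_natCast_iff]
  have hr' : (4 * a : ℚ) = r * r := by exact_mod_cast hr
  exact ⟨r / 2, by linarith⟩

lemma one_le_abs_natCast_sub_sq {m : ℕ} (h : ¬ IsSquare m) (k : ℤ) :
    (1 : ℝ) ≤ |(m : ℝ) - (k : ℝ) ^ 2| := by
  have hne : (m : ℤ) - k ^ 2 ≠ 0 := by
    rw [sub_ne_zero]
    rintro hk
    exact h (Int.isSquare_natCast_iff.mp ⟨k, by rw [hk, sq]⟩)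
  exact_mod_cast Int.one_le_abs hne

theorem one_div_le_distNearestInt_sqrt {m : ℕ} (h : ¬ IsSquare m) :
    1 / (2 * √m + 1) ≤ distNearestInt √m := by
  set x := √(m : ℝ)
  set r := round x
  have hx : 0 ≤ x := Real.sqrt_nonneg _
  have hround : |x - r| ≤ 1 / 2 := abs_sub_round x
  have hprod : 1 ≤ |x - r| * |x + r| := by
    have hx2 : x ^ 2 = m := Real.sq_sqrt (Nat.cast_nonneg m)
    rw [← abs_mul, show (x - r) * (x + r) = x ^ 2 - (r : ℝ) ^ 2 by ring, hx2]
    exact one_le_abs_natCast_sub_sq h r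
  have hsum : |x + r| ≤ 2 * x + 1 := by
    calc |x + r| = |2 * x - (x - r)| := by ring_nf
      _ ≤ |2 * x| + |x - r| := abs_sub _ _
      _ ≤ 2 * x + 1 := by rw [abs_of_nonneg (by positivity)]; linarith
  rw [div_le_iff₀ (by positivity)]
  calc 1 ≤ |x - r| * |x + r| := hprod
    _ ≤ |x - r| * (2 * x + 1) := mul_le_mul_of_nonneg_left hsum (abs_nonneg _)

lemma sqrt_four_mul_mul_le {a b n : ℝ} (ha : 0 ≤ a) (hb : 0 ≤ b) (han : a ≤ n) (hbn : b ≤ n) :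
    √(4 * a * b) ≤ 2 * n := by
  rw [Real.sqrt_le_left (by linarith)]
  nlinarith [mul_le_mul han hbn hb (ha.trans han)]

theorem sqrt_4a_bound :
    (∀ a : ℕ, 0 < a → ¬ IsSquare a →
      1 / (2 * Real.sqrt (4 * a) + 1) ≤ distNearestInt (Real.sqrt (4 * a))) ∧
    (∀ n a b : ℕ, 1 ≤ a → a ≤ n → 1 ≤ b → b ≤ n → ¬ IsSquare (4 * a * b) →
      1 / (5 * n) ≤ distNearestInt (Real.sqrt (4 * a * b))) := by
  refine ⟨fun a _ h ↦ ?_, fun n a b ha han _ hbn h ↦ ?_⟩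
  · simpa using one_div_le_distNearestInt_sqrt (not_isSquare_four_mul h)
  · have hbound := one_div_le_distNearestInt_sqrt h
    push_cast at hbound
    have hn : (1 : ℝ) ≤ n := by exact_mod_cast ha.trans han
    have hsqrt := sqrt_four_mul_mul_le (Nat.cast_nonneg a) (Nat.cast_nonneg b)
      (Nat.cast_le.mpr han) (Nat.cast_le.mpr hbn)
    refine le_trans (one_div_le_one_div_of_le (by positivity) ?_) hbound
    linarith
end

section
/- Let k ≥ 1 and let a₁, …, a_k be integers in {1,…,n} whose squarefree parts are pairwise distinct and all greater than 1 (so that 1, √a₁, …, √a_k are linearly independent over ℚ). Then √a₁ + ⋯ + √a_k is irrational, and ‖√a₁ + ⋯ + √a_k‖ ≥ c_k · n^(1/2 − 2^(k−1)) for a constant c_k > 0 depending only on k. -/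
/-!
The signed sums `∑ εᵢ √aᵢ` (`εᵢ = ±1`) are the roots of `p(X) = ∏_ε (X - ∑ εᵢ √aᵢ)`, which has
integer coefficients: multiplying the two conjugates `g(x - √a) g(x + √a)` removes one square root
at a time. None of the signed sums is rational, since the square roots of distinct squarefree
numbers are linearly independent over `ℚ`; so at `M = round (∑ √aᵢ)` the integer `p(M)` is nonzero.
Then `1 ≤ |p(M)| = |M - ∑ √aᵢ| · ∏ (other factors)`, and each of the `2^k - 1` other factors is at
most `(2k + 1) √n`.
-/

open Finset Polynomial

section SignedSums

variable {R A : Type*} [CommRing R] [CommRing A] [Algebra R A]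

-- `E` and `O` are the even and odd parts of `q (x + Y)` as a polynomial in `Y`.
theorem Polynomial.exists_aeval_add_eq_add_mul (q : R[X]) (b : R) :
    ∃ E O : R[X], ∀ x y : A, y ^ 2 = algebraMap R A b →
      aeval (x + y) q = aeval x E + y * aeval x O := by
  induction q using Polynomial.induction_on with
  | C c => exact ⟨C c, 0, fun x y _ => by simp⟩
  | add p q hp hq =>
    obtain ⟨E₁, O₁, h₁⟩ := hp
    obtain ⟨E₂, O₂, h₂⟩ := hq
    exact ⟨E₁ + E₂, O₁ + O₂, fun x y hy => by simp only [map_add, h₁ x y hy, h₂ x y hy]; ring⟩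
  | monomial n c ih =>
    obtain ⟨E, O, h⟩ := ih
    refine ⟨X * E + C b * O, E + X * O, fun x y hy => ?_⟩
    have h' := h x y hy
    simp only [map_mul, map_pow, aeval_C, aeval_X, map_add] at h' ⊢
    rw [pow_succ, ← mul_assoc, h']
    linear_combination (aeval x O) * hy

theorem Polynomial.exists_aeval_eq_aeval_sub_mul_aeval_add (q : R[X]) (b : R) :
    ∃ h : R[X], ∀ x y : A, y ^ 2 = algebraMap R A b →
      aeval x h = aeval (x - y) q * aeval (x + y) q := by
  obtain ⟨E, O, hEO⟩ := q.exists_aeval_add_eq_add_mul (A := A) b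
  refine ⟨E ^ 2 - C b * O ^ 2, fun x y hy => ?_⟩
  rw [sub_eq_add_neg x y, hEO x (-y) (by rwa [neg_sq]), hEO x y hy]
  simp only [map_sub, map_mul, map_pow, aeval_C]
  linear_combination (aeval x O) ^ 2 * hy

theorem exists_aeval_eq_prod_sub_sum_smul (k : ℕ) (y : Fin k → A) (b : Fin k → R)
    (hy : ∀ i, y i ^ 2 = algebraMap R A (b i)) :
    ∃ h : R[X], ∀ x : A, aeval x h = ∏ ε : Fin k → ℤˣ, (x - ∑ i, ε i • y i) := by
  induction k with
  | zero => exact ⟨X, fun x => by simp⟩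
  | succ k ih =>
    obtain ⟨g, hg⟩ := ih (fun i => y i.succ) (fun i => b i.succ) (fun i => hy i.succ)
    obtain ⟨h, hh⟩ := g.exists_aeval_eq_aeval_sub_mul_aeval_add (A := A) (b 0)
    refine ⟨h, fun x => ?_⟩
    rw [hh x (y 0) (hy 0), hg, hg, ← (Fin.consEquiv fun _ => ℤˣ).prod_comp,
      Fintype.prod_prod_type]
    show _ = ∏ u ∈ ({1, -1} : Finset ℤˣ), _
    rw [Finset.prod_pair (by decide)]
    simp only [Fin.consEquiv, Equiv.coe_fn_mk, Fin.sum_univ_succ, Fin.cons_zero, Fin.cons_succ,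
      one_smul, Units.neg_smul]
    congr 1 <;> refine Finset.prod_congr rfl fun ε _ => by ring

end SignedSums

theorem Algebra.exists_add_mul_of_mem_adjoin_insert {R A : Type*} [CommRing R] [CommRing A]
    [Algebra R A] {s : Set A} {x y : A} (hy : y ^ 2 ∈ adjoin R s)
    (hx : x ∈ adjoin R (insert y s)) :
    ∃ u ∈ adjoin R s, ∃ v ∈ adjoin R s, x = u + v * y := by
  induction hx using Algebra.adjoin_induction with
  | mem x hx =>
    rcases hx with rfl | hx
    · exact ⟨0, zero_mem _, 1, one_mem _, by ring⟩
    · exact ⟨x, subset_adjoin hx, 0, zero_mem _, by ring⟩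
  | algebraMap r => exact ⟨algebraMap R A r, Subalgebra.algebraMap_mem _ r, 0, zero_mem _, by ring⟩
  | add x x' _ _ ih ih' =>
    obtain ⟨u, hu, v, hv, rfl⟩ := ih
    obtain ⟨u', hu', v', hv', rfl⟩ := ih'
    exact ⟨u + u', add_mem hu hu', v + v', add_mem hv hv', by ring⟩
  | mul x x' _ _ ih ih' =>
    obtain ⟨u, hu, v, hv, rfl⟩ := ih
    obtain ⟨u', hu', v', hv', rfl⟩ := ih'
    refine ⟨u * u' + v * v' * y ^ 2, add_mem (mul_mem hu hu') (mul_mem (mul_mem hv hv') hy),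
      u * v' + v * u', add_mem (mul_mem hu hv') (mul_mem hv hu'), by ring⟩

namespace Nat

theorem primeFactors_subset_of_subset_insert_of_not_dvd {n q : ℕ} {S : Finset ℕ}
    (h : n.primeFactors ⊆ insert q S) (hq : ¬ q ∣ n) : n.primeFactors ⊆ S :=
  (Finset.subset_insert_iff_of_notMem fun hmem => hq (dvd_of_mem_primeFactors hmem)).mp h

theorem squarefree_div_and_primeFactors_subset {n q : ℕ} {S : Finset ℕ} (hq : q.Prime)
    (hqn : q ∣ n) (h : Squarefree n ∧ n.primeFactors ⊆ insert q S) :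
    Squarefree (n / q) ∧ (n / q).primeFactors ⊆ S := by
  refine ⟨h.1.squarefree_of_dvd (div_dvd_of_dvd hqn),
    primeFactors_subset_of_subset_insert_of_not_dvd
      ((primeFactors_mono (div_dvd_of_dvd hqn) h.1.ne_zero).trans h.2) fun hdvd => ?_⟩
  have : q * q ∣ n := by simpa [Nat.mul_div_cancel' hqn] using mul_dvd_mul_left q hdvd
  exact hq.not_isUnit (h.1 q this)

theorem primeFactors_subset_insert_of_div {n q : ℕ} {S : Finset ℕ} (hq : q.Prime)
    (hqn : q ∣ n) (h : (n / q).primeFactors ⊆ S) : n.primeFactors ⊆ insert q S := by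
  rcases eq_or_ne n 0 with rfl | hn
  · simp
  have hdiv : n / q ≠ 0 := (Nat.div_pos (le_of_dvd (pos_of_ne_zero hn) hqn) hq.pos).ne'
  rw [← Nat.mul_div_cancel' hqn, primeFactors_mul hq.ne_zero hdiv, hq.primeFactors,
    ← insert_eq]
  exact insert_subset_insert q h

end Nat

noncomputable def sqrtAdjoin (S : Finset ℕ) : Subalgebra ℚ ℝ :=
  Algebra.adjoin ℚ ((fun p : ℕ => √(p : ℝ)) '' S)

theorem sqrt_mem_sqrtAdjoin {S : Finset ℕ} {n : ℕ} (hn : Squarefree n)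
    (h : n.primeFactors ⊆ S) : √(n : ℝ) ∈ sqrtAdjoin S := by
  rw [← Nat.prod_primeFactors_of_squarefree hn, Nat.cast_prod,
    Real.sqrt_prod _ fun _ _ => Nat.cast_nonneg _]
  exact Subalgebra.prod_mem _ fun p hp => Algebra.subset_adjoin ⟨p, h hp, rfl⟩

theorem inv_mem_sqrtAdjoin {S : Finset ℕ} {x : ℝ} (hx : x ∈ sqrtAdjoin S) :
    x⁻¹ ∈ sqrtAdjoin S := by
  have hint : sqrtAdjoin S ≤ integralClosure ℚ ℝ := Algebra.adjoin_le <| by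
    rintro _ ⟨p, -, rfl⟩
    refine ⟨X ^ 2 - C (p : ℚ), monic_X_pow_sub_C _ two_ne_zero, ?_⟩
    simp [Real.sq_sqrt (Nat.cast_nonneg p)]
  exact Subalgebra.inv_mem_of_algebraic (A := sqrtAdjoin S) (x := ⟨x, hx⟩) (hint hx).isAlgebraic

theorem exists_add_mul_sqrt_of_mem_sqrtAdjoin_insert {S : Finset ℕ} {q : ℕ} {x : ℝ}
    (hx : x ∈ sqrtAdjoin (insert q S)) :
    ∃ u ∈ sqrtAdjoin S, ∃ v ∈ sqrtAdjoin S, x = u + v * √(q : ℝ) := by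
  rw [sqrtAdjoin, coe_insert, Set.image_insert_eq] at hx
  refine Algebra.exists_add_mul_of_mem_adjoin_insert ?_ hx
  rw [Real.sq_sqrt (Nat.cast_nonneg q)]
  exact Subalgebra.natCast_mem _ q

theorem exists_sqrt_mem_sqrtAdjoin_of_sqrt_eq_mul_sqrt {S : Finset ℕ} {n q : ℕ} (hq : q.Prime)
    (hqS : q ∉ S) (hn : Squarefree n) (hnS : ¬ n.primeFactors ⊆ insert q S) {v : ℝ}
    (hv : v ∈ sqrtAdjoin S) (h : √(n : ℝ) = v * √(q : ℝ)) :
    ∃ m : ℕ, Squarefree m ∧ ¬ m.primeFactors ⊆ S ∧ √(m : ℝ) ∈ sqrtAdjoin S := by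
  by_cases hqn : q ∣ n
  · refine ⟨n / q, hn.squarefree_of_dvd (Nat.div_dvd_of_dvd hqn),
      fun h => hnS (Nat.primeFactors_subset_insert_of_div hq hqn h), ?_⟩
    have : √(q : ℝ) * √((n / q : ℕ) : ℝ) = √(q : ℝ) * v := by
      rw [← Real.sqrt_mul (Nat.cast_nonneg q), ← Nat.cast_mul, Nat.mul_div_cancel' hqn, h,
        mul_comm]
    rwa [mul_left_cancel₀ (Real.sqrt_pos.mpr (Nat.cast_pos.mpr hq.pos)).ne' this]
  · have hcop : Nat.Coprime n q := ((Nat.Prime.coprime_iff_not_dvd hq).mpr hqn).symm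
    refine ⟨n * q, (Nat.squarefree_mul hcop).mpr ⟨hn, hq.squarefree⟩,
      fun h => hqS (h (Nat.mem_primeFactors.mpr ⟨hq, dvd_mul_left q n,
        mul_ne_zero hn.ne_zero hq.ne_zero⟩)), ?_⟩
    rw [Nat.cast_mul, Real.sqrt_mul (Nat.cast_nonneg n), h, mul_assoc, ← sq,
      Real.sq_sqrt (Nat.cast_nonneg q)]
    exact mul_mem hv (Subalgebra.natCast_mem _ q)

theorem sqrt_notMem_sqrtAdjoin (S : Finset ℕ) (hS : ∀ p ∈ S, p.Prime) {n : ℕ}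
    (hn : Squarefree n) (hnS : ¬ n.primeFactors ⊆ S) : √(n : ℝ) ∉ sqrtAdjoin S := by
  induction S using Finset.induction_on generalizing n with
  | empty =>
    have hsq : ¬ IsSquare n := by
      rintro ⟨m, rfl⟩
      obtain rfl : m = 1 := Nat.isUnit_iff.mp (hn m dvd_rfl)
      simp at hnS
    rw [sqrtAdjoin, coe_empty, Set.image_empty, Algebra.adjoin_empty, Algebra.mem_bot]
    rintro ⟨r, hr⟩
    exact irrational_sqrt_natCast_iff.mpr hsq ⟨r, by rw [← hr, eq_ratCast]⟩
  | insert q S hqS ih =>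
    have hq : q.Prime := hS q (mem_insert_self q S)
    replace ih := @ih fun p hp => hS p (mem_insert_of_mem hp)
    have hqK : √(q : ℝ) ∉ sqrtAdjoin S := ih hq.squarefree (by simpa [hq.primeFactors] using hqS)
    intro hmem
    obtain ⟨u, hu, v, hv, huv⟩ := exists_add_mul_sqrt_of_mem_sqrtAdjoin_insert hmem
    have hsq_n : √(n : ℝ) ^ 2 = n := Real.sq_sqrt (Nat.cast_nonneg n)
    have hsq_q : √(q : ℝ) ^ 2 = q := Real.sq_sqrt (Nat.cast_nonneg q)
    by_cases hv0 : v = 0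
    · exact ih hn (fun h => hnS (h.trans (subset_insert q S))) (by simpa [huv, hv0] using hu)
    by_cases hu0 : u = 0
    · obtain ⟨m, hm, hmS, hmK⟩ :=
        exists_sqrt_mem_sqrtAdjoin_of_sqrt_eq_mul_sqrt hq hqS hn hnS hv (by rw [huv, hu0, zero_add])
      exact ih hm hmS hmK
    -- squaring `√n = u + v √q` expresses `√q` through `u, v ∈ sqrtAdjoin S`
    refine hqK ?_
    have : √(q : ℝ) = (n - u ^ 2 - v ^ 2 * q) * (2 * u * v)⁻¹ := by
      rw [eq_mul_inv_iff_mul_eq₀ (by simp [hu0, hv0])]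
      linear_combination (-(√(n : ℝ) + u + v * √(q : ℝ))) * huv + hsq_n - v ^ 2 * hsq_q
    rw [this]
    refine mul_mem ?_ (inv_mem_sqrtAdjoin ?_)
    · exact sub_mem (sub_mem (Subalgebra.natCast_mem _ n) (pow_mem hu 2))
        (mul_mem (pow_mem hv 2) (Subalgebra.natCast_mem _ q))
    · exact mul_mem (mul_mem (Subalgebra.natCast_mem _ 2) hu) hv

theorem eq_zero_of_add_mul_sqrt_eq_zero {S : Finset ℕ} (hS : ∀ p ∈ S, p.Prime) {q : ℕ}
    (hq : q.Prime) (hqS : q ∉ S) {u v : ℝ} (hu : u ∈ sqrtAdjoin S) (hv : v ∈ sqrtAdjoin S)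
    (h : u + v * √(q : ℝ) = 0) : u = 0 ∧ v = 0 := by
  have hv0 : v = 0 := by
    by_contra hv0
    refine sqrt_notMem_sqrtAdjoin S hS hq.squarefree (by simpa [hq.primeFactors] using hqS) ?_
    rw [show √(q : ℝ) = -u * v⁻¹ by field_simp; linear_combination h]
    exact mul_mem (neg_mem hu) (inv_mem_sqrtAdjoin hv)
  exact ⟨by simpa [hv0] using h, hv0⟩

theorem sum_smul_sqrt_eq_add_mul_sqrt (t : Finset ℕ) (g : ℕ → ℚ) (q : ℕ) :
    ∑ n ∈ t, g n • √(n : ℝ) = ∑ n ∈ t with ¬ q ∣ n, g n • √(n : ℝ) +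
      (∑ m ∈ {n ∈ t | q ∣ n}.image (· / q), g (q * m) • √(m : ℝ)) * √(q : ℝ) := by
  rw [← sum_filter_not_add_sum_filter t (q ∣ ·), sum_image, sum_mul]
  · congr 1
    refine sum_congr rfl fun n hn => ?_
    rw [Nat.mul_div_cancel' (mem_filter.mp hn).2, smul_mul_assoc,
      ← Real.sqrt_mul (Nat.cast_nonneg _), ← Nat.cast_mul, Nat.div_mul_cancel (mem_filter.mp hn).2]
  · exact fun n hn n' hn' h => (Nat.div_left_inj (mem_filter.mp hn).2 (mem_filter.mp hn').2).mp h

theorem linearIndepOn_sqrt_of_primeFactors_subset (S : Finset ℕ) (hS : ∀ p ∈ S, p.Prime) :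
    LinearIndepOn ℚ (fun n : ℕ => √(n : ℝ)) {n | Squarefree n ∧ n.primeFactors ⊆ S} := by
  induction S using Finset.induction_on with
  | empty =>
    refine (LinearIndepOn.singleton (i := 1) (by simp)).mono fun n ⟨hn, hnS⟩ => ?_
    simpa [hn.ne_zero] using hnS
  | insert q S hqS ih =>
    have hq : q.Prime := hS q (mem_insert_self q S)
    replace hS : ∀ p ∈ S, p.Prime := fun p hp => hS p (mem_insert_of_mem hp)
    replace ih := linearIndepOn_iff'.mp (ih hS)
    refine linearIndepOn_iff'.mpr fun t g ht hsum => ?_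
    rw [sum_smul_sqrt_eq_add_mul_sqrt t g q] at hsum
    have hcoprime : ∀ n ∈ {n ∈ t | ¬ q ∣ n}, Squarefree n ∧ n.primeFactors ⊆ S := fun n hn =>
      ⟨(ht (mem_filter.mp hn).1).1, Nat.primeFactors_subset_of_subset_insert_of_not_dvd
        (ht (mem_filter.mp hn).1).2 (mem_filter.mp hn).2⟩
    have hmultiple : ∀ m ∈ {n ∈ t | q ∣ n}.image (· / q), Squarefree m ∧ m.primeFactors ⊆ S := by
      simp only [mem_image, mem_filter]
      rintro _ ⟨n, ⟨hnt, hqn⟩, rfl⟩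
      exact Nat.squarefree_div_and_primeFactors_subset hq hqn (ht hnt)
    obtain ⟨hA, hB⟩ := eq_zero_of_add_mul_sqrt_eq_zero hS hq hqS
      (Subalgebra.sum_mem _ fun n hn =>
        Subalgebra.smul_mem _ (sqrt_mem_sqrtAdjoin (hcoprime n hn).1 (hcoprime n hn).2) _)
      (Subalgebra.sum_mem _ fun m hm =>
        Subalgebra.smul_mem _ (sqrt_mem_sqrtAdjoin (hmultiple m hm).1 (hmultiple m hm).2) _) hsum
    intro n hnt
    by_cases hqn : q ∣ n
    · have := ih _ _ hmultiple hB (n / q) (mem_image_of_mem _ (mem_filter.mpr ⟨hnt, hqn⟩))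
      rwa [Nat.mul_div_cancel' hqn] at this
    · exact ih _ g hcoprime hA n (mem_filter.mpr ⟨hnt, hqn⟩)

theorem linearIndepOn_sqrt_squarefree :
    LinearIndepOn ℚ (fun n : ℕ => √(n : ℝ)) {n | Squarefree n} := by
  refine linearIndepOn_iff'.mpr fun t g ht hsum => linearIndepOn_iff'.mp
    (linearIndepOn_sqrt_of_primeFactors_subset (t.biUnion Nat.primeFactors) ?_) t g
    (fun n hn => ⟨ht hn, subset_biUnion_of_mem _ hn⟩) hsum
  intro p hp
  obtain ⟨n, -, hpn⟩ := mem_biUnion.mp hp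
  exact Nat.prime_of_mem_primeFactors hpn

theorem irrational_sum_mul_sqrt {ι : Type*} [Fintype ι] [Nonempty ι] {s : ι → ℕ}
    (hs : Function.Injective s) (hsf : ∀ i, Squarefree (s i)) (hs1 : ∀ i, s i ≠ 1)
    {c : ι → ℚ} (hc : ∀ i, c i ≠ 0) : Irrational (∑ i, (c i : ℝ) * √(s i : ℝ)) := by
  rintro ⟨r, hr⟩
  -- `1 = √1` joins the family `√(s i)`, so a rational value would be a linear relation
  let f : Option ι → ℕ := fun o => o.elim 1 s
  have hf : Function.Injective f := by
    rintro (_ | i) (_ | j) h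
    exacts [rfl, (hs1 j h.symm).elim, (hs1 i h).elim, congrArg some (hs h)]
  have hli : LinearIndependent ℚ ((fun n : ℕ => √(n : ℝ)) ∘ f) :=
    (linearIndepOn_range_iff hf _).mp <| linearIndepOn_sqrt_squarefree.mono <| by
      rintro _ ⟨_ | i, rfl⟩
      exacts [squarefree_one, hsf i]
  obtain ⟨i⟩ := ‹Nonempty ι›
  refine hc i (Fintype.linearIndependent_iff.mp hli (fun o => o.elim (-r) c) ?_ (some i))
  simp [f, Fintype.sum_option, hr, Rat.smul_def]

theorem irrational_sum_units_smul_sqrt {ι : Type*} [Fintype ι] [Nonempty ι] {a s m : ι → ℕ}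
    (hs : Function.Injective s) (hsf : ∀ i, Squarefree (s i)) (hs1 : ∀ i, s i ≠ 1)
    (hm : ∀ i, m i ≠ 0) (ha : ∀ i, a i = s i * m i ^ 2) (ε : ι → ℤˣ) :
    Irrational (∑ i, ε i • √(a i : ℝ)) := by
  have hsqrt : ∀ i, ε i • √(a i : ℝ) = (((ε i * m i : ℤ) : ℚ) : ℝ) * √(s i : ℝ) := fun i => by
    rw [ha i, Nat.cast_mul, Real.sqrt_mul' _ (by positivity), Nat.cast_pow,
      Real.sqrt_sq (Nat.cast_nonneg _), Units.smul_def, zsmul_eq_mul]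
    push_cast
    ring
  simp only [hsqrt]
  exact irrational_sum_mul_sqrt hs hsf hs1 fun i => by simp [hm i]

theorem abs_sum_units_smul_le {ι : Type*} (t : Finset ι) (ε : ι → ℤˣ) (y : ι → ℝ) :
    |∑ i ∈ t, ε i • y i| ≤ ∑ i ∈ t, |y i| :=
  (abs_sum_le_sum_abs _ _).trans_eq <| sum_congr rfl fun i _ => by
    rcases Int.units_eq_one_or (ε i) with h | h <;> simp [h]

theorem abs_round_sub_sum_units_smul_le {ι : Type*} (t : Finset ι) (ε : ι → ℤˣ) (y : ι → ℝ) :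
    |(round (∑ i ∈ t, y i) : ℝ) - ∑ i ∈ t, ε i • y i| ≤ 1 / 2 + 2 * ∑ i ∈ t, |y i| := by
  have hround := abs_sub_round (∑ i ∈ t, y i)
  have hT : |∑ i ∈ t, y i| ≤ ∑ i ∈ t, |y i| := abs_sum_le_sum_abs _ _
  have := abs_sub_le (round (∑ i ∈ t, y i) : ℝ) (∑ i ∈ t, y i) (∑ i ∈ t, ε i • y i)
  have := abs_sub (∑ i ∈ t, y i) (∑ i ∈ t, ε i • y i)
  rw [abs_sub_comm] at hround
  linarith [abs_sum_units_smul_le t ε y]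

theorem one_le_abs_sub_mul_pow_of_prod_eq_int {ι : Type*} [Fintype ι] [DecidableEq ι]
    (t : ι → ℝ) (i₀ : ι) (z : ℝ) {B : ℝ} (hprod : ∃ m : ℤ, m ≠ 0 ∧ ∏ i, (z - t i) = m)
    (hB : ∀ i, |z - t i| ≤ B) : 1 ≤ |z - t i₀| * B ^ (Fintype.card ι - 1) := by
  obtain ⟨m, hm, hprod⟩ := hprod
  calc (1 : ℝ) ≤ |(m : ℝ)| := by exact_mod_cast Int.one_le_abs hm
    _ = |z - t i₀| * ∏ i ∈ univ.erase i₀, |z - t i| := by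
      rw [← hprod, ← mul_prod_erase univ _ (mem_univ i₀), abs_mul, abs_prod]
    _ ≤ |z - t i₀| * ∏ _i ∈ univ.erase i₀, B := by
      gcongr with i
      exact hB i
    _ = |z - t i₀| * B ^ (Fintype.card ι - 1) := by
      rw [prod_const, card_erase_of_mem (mem_univ i₀), card_univ]

theorem one_le_abs_int_sub_sum_mul_pow {k : ℕ} (y : Fin k → ℝ) (b : Fin k → ℤ)
    (hy : ∀ i, y i ^ 2 = b i) (hirr : ∀ ε : Fin k → ℤˣ, Irrational (∑ i, ε i • y i)) (z : ℤ)
    {B : ℝ} (hB : ∀ ε : Fin k → ℤˣ, |z - ∑ i, ε i • y i| ≤ B) :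
    1 ≤ |z - ∑ i, y i| * B ^ (2 ^ k - 1) := by
  obtain ⟨p, hp⟩ := exists_aeval_eq_prod_sub_sum_smul k y b (by simpa using hy)
  have hval : ∏ ε : Fin k → ℤˣ, ((z : ℝ) - ∑ i, ε i • y i) = ((p.eval z : ℤ) : ℝ) := by
    rw [← hp]
    exact aeval_algebraMap_apply_eq_algebraMap_eval z p
  have hne : p.eval z ≠ 0 := fun hz => by
    obtain ⟨ε, -, hε⟩ := prod_eq_zero_iff.mp (hval.trans (by rw [hz, Int.cast_zero]))
    exact (hirr ε).ne_int z (sub_eq_zero.mp hε).symm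
  simpa [Fintype.card_fun, Fintype.card_units_int] using
    one_le_abs_sub_mul_pow_of_prod_eq_int _ 1 _ ⟨_, hne, hval⟩ hB

theorem Real.rpow_half_sub_two_pow_pred {x : ℝ} (hx : 0 ≤ x) {k : ℕ} (hk : 1 ≤ k) :
    x ^ ((1 : ℝ) / 2 - 2 ^ (k - 1)) = (√x ^ (2 ^ k - 1))⁻¹ := by
  have hexp : (1 : ℝ) / 2 - 2 ^ (k - 1) = -(((2 ^ k - 1 : ℕ) : ℝ) / 2) := by
    obtain ⟨j, rfl⟩ := Nat.exists_eq_add_of_le' hk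
    rw [Nat.cast_sub Nat.one_le_two_pow]
    push_cast
    ring
  rw [hexp, Real.rpow_neg hx, Real.sqrt_eq_rpow, ← Real.rpow_natCast, ← Real.rpow_mul hx]
  ring_nf

theorem general_lower_bound (k : ℕ) (hk : 1 ≤ k) :
    ∃ c : ℝ, 0 < c ∧ ∀ (n : ℕ) (a : Fin k → ℕ),
      (∀ i, 1 ≤ a i ∧ a i ≤ n) →
      (∃ s : Fin k → ℕ, Function.Injective s ∧
        ∀ i, Squarefree (s i) ∧ 1 < s i ∧ ∃ m : ℕ, a i = s i * m ^ 2) →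
      Irrational (∑ i, Real.sqrt (a i)) ∧
      c * (n : ℝ) ^ ((1 : ℝ) / 2 - 2 ^ (k - 1)) ≤ distNearestInt (∑ i, Real.sqrt (a i)) := by
  refine ⟨(2 * (k : ℝ) + 1)⁻¹ ^ (2 ^ k - 1), by positivity, fun n a ha ⟨s, hs, hsa⟩ => ?_⟩
  choose hsf hs1 m hm using hsa
  have : Nonempty (Fin k) := ⟨⟨0, hk⟩⟩
  have hirr := irrational_sum_units_smul_sqrt hs hsf (fun i => (hs1 i).ne')
    (fun i h0 => by simpa [hm i, h0] using (ha i).1) hm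
  refine ⟨by simpa using hirr 1, ?_⟩
  have hn : 1 ≤ √(n : ℝ) :=
    Real.one_le_sqrt.mpr (by exact_mod_cast (ha ⟨0, hk⟩).1.trans (ha ⟨0, hk⟩).2)
  have hsum : ∑ i, |√(a i : ℝ)| ≤ k * √(n : ℝ) :=
    calc ∑ i, |√(a i : ℝ)| ≤ ∑ _i : Fin k, √(n : ℝ) := sum_le_sum fun i _ => by
          rw [abs_of_nonneg (Real.sqrt_nonneg _)]
          exact Real.sqrt_le_sqrt (by exact_mod_cast (ha i).2)
      _ = k * √(n : ℝ) := by simp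
  have key := one_le_abs_int_sub_sum_mul_pow (fun i => √(a i : ℝ)) (fun i => a i) (by simp)
    hirr (round (∑ i, √(a i : ℝ))) (B := (2 * k + 1) * √(n : ℝ)) fun ε =>
      (abs_round_sub_sum_units_smul_le univ ε _).trans (by linarith)
  rw [distNearestInt, abs_sub_comm, Real.rpow_half_sub_two_pow_pred (Nat.cast_nonneg n) hk,
    inv_pow, ← mul_inv, ← mul_pow]
  exact (inv_le_iff_one_le_mul₀ (by positivity)).mpr key
end
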